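/- Let (g_k)_{k≥1} and (g′_k)_{k≥1} be two families of measurable functions X → [0, ∞), each with 0 < ∫ g_k dμ < ∞ and 0 < ∫ g′_k dμ < ∞, and suppose there is an integer T ≥ 0 such that g_k = g′_k for all k > T. Let Nₙ(x) and N′ₙ(x) denote the corresponding quantities built from (g_k) and (g′_k) respectively. Then for every n ≥ T + 1 and all x, x′ ∈ X, |log(Nₙ(x)/N_{n−1}(x)) − log(N′ₙ(x′)/N′_{n−1}(x′))| ≤ ρ^{n−T−1}/(1 − ρ), where ρ = 1 − σ₋/σ₊. (This is inequality (26) from the proof of Lemma 11: once two observation sequences agree after the coupling time T, the one-step conditional log-densities computed from the two sequences and arbitrary initializations coalesce geometrically fast.) -/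

import Mathlib

/-!
Write `r_n = N_{n+1} / N_n`. Integrating out `x₁` first, `r_{n+1}` for `(g_k)` is an average of
`r_n` for the shifted family `(g_{k+1})` against the weights `q(x, y) g_1(y) N_n(y) μ(dy)`,
normalised in `y`. Since `σ₋ ≤ q ≤ σ₊`, all these normalised weights share the component
`(σ₋/σ₊) g_1 N_n / ∫ g_1 N_n` (Doeblin's minorisation), so an average stays in any interval
containing the averaged function, and its oscillation is smaller by the factor `ρ`.
Starting from `r_0 = N_1 ∈ [σ₋ ∫ g_1, σ₊ ∫ g_1]`, the ratio `r_m`, `m = n - T - 1`, of the common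
tail `(g_{k+T}) = (g'_{k+T})` takes values in an interval `[a, a + ρ^m (σ₊ - σ₋) ∫ g_n]` with
`a ≥ σ₋ ∫ g_n`. The remaining `T` averages keep both `r_{n-1}(x)` and `r'_{n-1}(x')` in that
interval, on which `log` is `1/a`-Lipschitz.
-/

open MeasureTheory

/-- `Nseq μ q g x n = ∫_{Xⁿ} ∏_{k=1}ⁿ q(x_{k−1}, x_k) g_k(x_k) μ(dx₁)⋯μ(dxₙ)`,
with `x₀ := x` (for `n = 0` this is `1`, the empty product integrated against a
probability measure). The coordinate `xs k` of `xs : Fin n → X` plays the role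
of `x_{k+1}`, and `g (k+1)` plays the role of `g_{k+1}`. -/
noncomputable def Nseq {X : Type*} [MeasurableSpace X] (μ : Measure X)
    (q : X → X → ℝ) (g : ℕ → X → ℝ) (x : X) (n : ℕ) : ℝ :=
  ∫ xs : Fin n → X,
    ∏ k : Fin n,
      q (if (k : ℕ) = 0 then x
         else xs ⟨(k : ℕ) - 1, Nat.lt_of_le_of_lt (Nat.sub_le _ _) k.isLt⟩) (xs k) *
        g ((k : ℕ) + 1) (xs k)
    ∂(Measure.pi fun _ => μ)

open Set

lemma exists_forall_mem_Icc_of_sub_le {ι : Type*} {f : ι → ℝ} {L c : ℝ} (hL : ∀ i, L ≤ f i)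
    (hc : ∀ i j, f i - f j ≤ c) : ∃ a, L ≤ a ∧ ∀ i, f i ∈ Icc a (a + c) := by
  rcases isEmpty_or_nonempty ι with hι | hι
  · exact ⟨L, le_rfl, isEmptyElim⟩
  · have hbdd : BddBelow (range f) := ⟨L, forall_mem_range.2 hL⟩
    refine ⟨⨅ i, f i, le_ciInf hL, fun i => ⟨ciInf_le hbdd i, ?_⟩⟩
    have := le_ciInf fun j => sub_le_comm.1 (hc i j)
    linarith

lemma abs_log_sub_log_le_of_mem_Icc {a c x y : ℝ} (ha : 0 < a) (hx : x ∈ Icc a (a + c))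
    (hy : y ∈ Icc a (a + c)) : |Real.log x - Real.log y| ≤ c / a := by
  have key : ∀ {u v : ℝ}, u ∈ Icc a (a + c) → v ∈ Icc a (a + c) →
      Real.log u - Real.log v ≤ c / a := fun {u v} hu hv => by
    have hu0 := ha.trans_le hu.1
    have hv0 := ha.trans_le hv.1
    calc Real.log u - Real.log v = Real.log (u / v) := (Real.log_div hu0.ne' hv0.ne').symm
      _ ≤ u / v - 1 := Real.log_le_sub_one_of_pos (div_pos hu0 hv0)
      _ ≤ c / a := by
        rw [div_sub_one hv0.ne', div_le_div_iff₀ hv0 ha]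
        calc (u - v) * a ≤ c * a := mul_le_mul_of_nonneg_right (by linarith [hu.2, hv.1]) ha.le
          _ ≤ c * v := mul_le_mul_of_nonneg_left hv.1 (by linarith [hv.1, hv.2])
  exact abs_sub_le_iff.2 ⟨key hx hy, key hy hx⟩

lemma pow_mul_div_le_pow_div_one_sub {σm σp I a : ℝ} (m : ℕ) (hσm : 0 < σm) (hσ : σm ≤ σp)
    (hI : 0 < I) (ha : σm * I ≤ a) :
    (1 - σm / σp) ^ m * ((σp - σm) * I) / a ≤ (1 - σm / σp) ^ m / (1 - (1 - σm / σp)) := by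
  have hσp := hσm.trans_le hσ
  have hρ : 0 ≤ (1 - σm / σp) ^ m :=
    pow_nonneg (sub_nonneg.2 ((div_le_one hσp).2 hσ)) m
  calc (1 - σm / σp) ^ m * ((σp - σm) * I) / a
      ≤ (1 - σm / σp) ^ m * ((σp - σm) * I) / (σm * I) :=
        div_le_div_of_nonneg_left (mul_nonneg hρ (mul_nonneg (by linarith) hI.le))
          (by positivity) ha
    _ = (1 - σm / σp) ^ m * (σp - σm) / σm := by field_simp
    _ ≤ (1 - σm / σp) ^ m / (1 - (1 - σm / σp)) := by
        rw [sub_sub_cancel, div_div_eq_mul_div, mul_div_assoc, mul_div_assoc]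
        exact mul_le_mul_of_nonneg_left (div_le_div_of_nonneg_right (by linarith) hσm.le) hρ

section

variable {X : Type*}

structure IsBoundedKernel (q : X → X → ℝ) (σm σp : ℝ) : Prop where
  pos : 0 < σm
  lower : ∀ x y, σm ≤ q x y
  upper : ∀ x y, q x y ≤ σp

namespace IsBoundedKernel

variable {q : X → X → ℝ} {σm σp : ℝ}

lemma nonneg (hK : IsBoundedKernel q σm σp) (x y : X) : 0 ≤ q x y :=
  hK.pos.le.trans (hK.lower x y)

lemma abs_le (hK : IsBoundedKernel q σm σp) (x y : X) : |q x y| ≤ σp :=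
  (abs_of_nonneg (hK.nonneg x y)).trans_le (hK.upper x y)

lemma lower_le_upper (hK : IsBoundedKernel q σm σp) (x : X) : σm ≤ σp :=
  (hK.lower x x).trans (hK.upper x x)

end IsBoundedKernel

def seqShift {α : Type*} (t : ℕ) (g : ℕ → α) : ℕ → α := fun k => g (k + t)

lemma seqShift_seqShift {α : Type*} (s t : ℕ) (g : ℕ → α) :
    seqShift s (seqShift t g) = seqShift (s + t) g := by
  funext k
  simp only [seqShift, add_assoc]

def pathWeight (q : X → X → ℝ) (g : ℕ → X → ℝ) (x : X) (n : ℕ) (xs : Fin n → X) : ℝ :=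
  ∏ k : Fin n,
    q (if (k : ℕ) = 0 then x
       else xs ⟨(k : ℕ) - 1, Nat.lt_of_le_of_lt (Nat.sub_le _ _) k.isLt⟩) (xs k) *
      g ((k : ℕ) + 1) (xs k)

section pathWeight

variable {q : X → X → ℝ} {g : ℕ → X → ℝ} {σm σp : ℝ}

lemma pathWeight_cons (x y : X) {n : ℕ} (ys : Fin n → X) :
    pathWeight q g x (n + 1) (Fin.cons y ys) =
      q x y * g 1 y * pathWeight q (seqShift 1 g) y n ys := by
  rw [pathWeight, Fin.prod_univ_succ]
  simp only [Fin.cons_zero, Fin.val_zero, Fin.cons_succ, Fin.val_succ]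
  congr 1
  refine Finset.prod_congr rfl fun k _ => ?_
  simp only [Nat.succ_ne_zero, if_false, Nat.add_sub_cancel, seqShift]
  congr 2
  rcases Nat.eq_zero_or_pos (k : ℕ) with hk | hk
  · rw [if_pos hk, show (⟨k, by omega⟩ : Fin (n + 1)) = 0 from Fin.ext hk, Fin.cons_zero]
  · rw [if_neg hk.ne', show (⟨k, by omega⟩ : Fin (n + 1)) = Fin.succ ⟨k - 1, by omega⟩ from
      Fin.ext (by simp; omega), Fin.cons_succ]

lemma pow_mul_prod_le_pathWeight (hK : IsBoundedKernel q σm σp)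
    (hg : ∀ k, 1 ≤ k → ∀ x, 0 ≤ g k x) (x : X) {n : ℕ} (xs : Fin n → X) :
    σm ^ n * ∏ k : Fin n, g (k + 1) (xs k) ≤ pathWeight q g x n xs := by
  rw [← Fin.prod_const, ← Finset.prod_mul_distrib]
  exact Finset.prod_le_prod (fun k _ => mul_nonneg hK.pos.le (hg _ (by omega) _))
    fun k _ => mul_le_mul_of_nonneg_right (hK.lower _ _) (hg _ (by omega) _)

lemma pathWeight_le_pow_mul_prod (hK : IsBoundedKernel q σm σp)
    (hg : ∀ k, 1 ≤ k → ∀ x, 0 ≤ g k x) (x : X) {n : ℕ} (xs : Fin n → X) :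
    pathWeight q g x n xs ≤ σp ^ n * ∏ k : Fin n, g (k + 1) (xs k) := by
  rw [← Fin.prod_const, ← Finset.prod_mul_distrib]
  exact Finset.prod_le_prod (fun k _ => mul_nonneg (hK.nonneg _ _) (hg _ (by omega) _))
    fun k _ => mul_le_mul_of_nonneg_right (hK.upper _ _) (hg _ (by omega) _)

end pathWeight

variable [MeasurableSpace X]

structure IsLikelihoodSeq (μ : Measure X) (g : ℕ → X → ℝ) : Prop where
  measurable : ∀ k, 1 ≤ k → Measurable (g k)
  nonneg : ∀ k, 1 ≤ k → ∀ x, 0 ≤ g k x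
  integrable : ∀ k, 1 ≤ k → Integrable (g k) μ
  integral_pos : ∀ k, 1 ≤ k → 0 < ∫ x, g k x ∂μ

lemma IsLikelihoodSeq.seqShift {μ : Measure X} {g : ℕ → X → ℝ} (hg : IsLikelihoodSeq μ g)
    (t : ℕ) : IsLikelihoodSeq μ (seqShift t g) where
  measurable k hk := hg.measurable (k + t) (by omega)
  nonneg k hk := hg.nonneg (k + t) (by omega)
  integrable k hk := hg.integrable (k + t) (by omega)
  integral_pos k hk := hg.integral_pos (k + t) (by omega)

section Nseq

variable {q : X → X → ℝ} {g : ℕ → X → ℝ} {σm σp : ℝ} {μ : Measure X}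

lemma Nseq_eq_integral_pathWeight (x : X) (n : ℕ) :
    Nseq μ q g x n = ∫ xs, pathWeight q g x n xs ∂Measure.pi fun _ => μ :=
  rfl

lemma Nseq_zero (x : X) : Nseq μ q g x 0 = 1 := by
  rw [Nseq, Measure.pi_of_empty]
  simp

lemma Nseq_congr {g' : ℕ → X → ℝ} (h : ∀ k, 1 ≤ k → g k = g' k) (x : X) (n : ℕ) :
    Nseq μ q g x n = Nseq μ q g' x n := by
  simp only [Nseq, h _ (Nat.le_add_left 1 _)]

lemma measurable_pathWeight (hq : Measurable (Function.uncurry q))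
    (hg : ∀ k, 1 ≤ k → Measurable (g k)) (n : ℕ) :
    Measurable fun p : X × (Fin n → X) => pathWeight q g p.1 n p.2 := by
  refine Finset.measurable_prod _ fun k _ => ?_
  have hprev : Measurable fun p : X × (Fin n → X) =>
      if (k : ℕ) = 0 then p.1
      else p.2 ⟨(k : ℕ) - 1, Nat.lt_of_le_of_lt (Nat.sub_le _ _) k.isLt⟩ := by
    split_ifs
    · exact measurable_fst
    · exact (measurable_pi_apply _).comp measurable_snd
  have hk : Measurable fun p : X × (Fin n → X) => p.2 k :=
    (measurable_pi_apply k).comp measurable_snd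
  exact (hq.comp (hprev.prodMk hk)).mul ((hg _ (by omega)).comp hk)

variable [SigmaFinite μ]

lemma integrable_pathWeight (hq : Measurable (Function.uncurry q))
    (hK : IsBoundedKernel q σm σp) (hg : IsLikelihoodSeq μ g) (x : X) (n : ℕ) :
    Integrable (pathWeight q g x n) (Measure.pi fun _ => μ) := by
  have hdom : Integrable (fun xs : Fin n → X => σp ^ n * ∏ k : Fin n, g (k + 1) (xs k))
      (Measure.pi fun _ => μ) :=
    (Integrable.fin_nat_prod fun k => hg.integrable _ (by omega)).const_mul _
  refine hdom.mono ((measurable_pathWeight hq hg.measurable n).comp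
    measurable_prodMk_left).aestronglyMeasurable (Filter.Eventually.of_forall fun xs => ?_)
  have h0 : 0 ≤ pathWeight q g x n xs :=
    Finset.prod_nonneg fun k _ => mul_nonneg (hK.nonneg _ _) (hg.nonneg _ (by omega) _)
  rw [Real.norm_of_nonneg h0]
  exact (pathWeight_le_pow_mul_prod hK hg.nonneg x xs).trans (Real.le_norm_self _)

lemma measurable_Nseq (hq : Measurable (Function.uncurry q))
    (hg : ∀ k, 1 ≤ k → Measurable (g k)) (n : ℕ) : Measurable fun x => Nseq μ q g x n :=
  (measurable_pathWeight hq hg n).stronglyMeasurable.integral_prod_right'.measurable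

lemma Nseq_succ (hq : Measurable (Function.uncurry q)) (hK : IsBoundedKernel q σm σp)
    (hg : IsLikelihoodSeq μ g) (x : X) (n : ℕ) :
    Nseq μ q g x (n + 1) = ∫ y, q x y * (g 1 y * Nseq μ q (seqShift 1 g) y n) ∂μ := by
  have hmp := (measurePreserving_piFinSuccAbove (fun _ : Fin (n + 1) => μ) 0).symm
  have hcons : ∀ z : X × (Fin n → X),
      (MeasurableEquiv.piFinSuccAbove (fun _ => X) 0).symm z = Fin.cons z.1 z.2 := fun z => by
    simp [MeasurableEquiv.piFinSuccAbove_symm_apply, Fin.insertNthEquiv, Fin.insertNth_zero']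
  have hint := (hmp.integrable_comp_emb (MeasurableEquiv.measurableEmbedding _)).2
    (integrable_pathWeight hq hK hg x (n + 1))
  simp only [Function.comp_def, hcons, pathWeight_cons] at hint
  rw [Nseq_eq_integral_pathWeight, ← hmp.integral_comp (MeasurableEquiv.measurableEmbedding _)]
  simp only [hcons, pathWeight_cons]
  rw [integral_prod _ hint]
  simp only [integral_const_mul, mul_assoc, Nseq_eq_integral_pathWeight]

lemma Nseq_mem_Icc (hq : Measurable (Function.uncurry q)) (hK : IsBoundedKernel q σm σp)
    (hg : IsLikelihoodSeq μ g) (x : X) (n : ℕ) :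
    Nseq μ q g x n ∈ Icc (σm ^ n * ∏ k : Fin n, ∫ y, g (k + 1) y ∂μ)
      (σp ^ n * ∏ k : Fin n, ∫ y, g (k + 1) y ∂μ) := by
  have hprod : Integrable (fun xs : Fin n → X => ∏ k : Fin n, g (k + 1) (xs k))
      (Measure.pi fun _ => μ) := Integrable.fin_nat_prod fun k => hg.integrable _ (by omega)
  simp only [← integral_fin_nat_prod_eq_prod, ← integral_const_mul]
  exact ⟨integral_mono (hprod.const_mul _) (integrable_pathWeight hq hK hg x n)
      (pow_mul_prod_le_pathWeight hK hg.nonneg x),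
    integral_mono (integrable_pathWeight hq hK hg x n) (hprod.const_mul _)
      (pathWeight_le_pow_mul_prod hK hg.nonneg x)⟩

lemma Nseq_pos (hq : Measurable (Function.uncurry q)) (hK : IsBoundedKernel q σm σp)
    (hg : IsLikelihoodSeq μ g) (x : X) (n : ℕ) : 0 < Nseq μ q g x n :=
  lt_of_lt_of_le (mul_pos (pow_pos hK.pos n) (Finset.prod_pos fun k _ =>
    hg.integral_pos _ (by omega))) (Nseq_mem_Icc hq hK hg x n).1

end Nseq

section kernelAvg

variable {μ : Measure X} {q : X → X → ℝ} {σm σp : ℝ} {W f : X → ℝ} {a b : ℝ}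

noncomputable def kernelAvg (μ : Measure X) (q : X → X → ℝ) (W f : X → ℝ) (w : X) : ℝ :=
  (∫ y, q w y * W y * f y ∂μ) / ∫ y, q w y * W y ∂μ

lemma integral_mul_mem_Icc {r : X → ℝ} (hr : ∀ y, 0 ≤ r y) (hri : Integrable r μ)
    (hf : AEStronglyMeasurable f μ) (hfa : ∀ y, a ≤ f y) (hfb : ∀ y, f y ≤ b) :
    ∫ y, r y * f y ∂μ ∈ Icc (a * ∫ y, r y ∂μ) (b * ∫ y, r y ∂μ) := by
  have hrf : Integrable (fun y => r y * f y) μ := hri.mul_bdd hf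
    (Filter.Eventually.of_forall fun y => abs_le_max_abs_abs (hfa y) (hfb y))
  rw [← integral_const_mul, ← integral_const_mul]
  exact ⟨integral_mono (hri.const_mul a) hrf fun y => by
      simpa only [mul_comm] using mul_le_mul_of_nonneg_left (hfa y) (hr y),
    integral_mono hrf (hri.const_mul b) fun y => by
      simpa only [mul_comm] using mul_le_mul_of_nonneg_left (hfb y) (hr y)⟩

lemma integrable_kernel_mul (hq : Measurable (Function.uncurry q)) (hK : IsBoundedKernel q σm σp)
    (hWi : Integrable W μ) (w : X) : Integrable (fun y => q w y * W y) μ :=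
  hWi.bdd_mul hq.of_uncurry_left.aestronglyMeasurable
    (Filter.Eventually.of_forall fun y => (Real.norm_eq_abs _).trans_le (hK.abs_le w y))

lemma integral_kernel_mul_mem_Icc (hq : Measurable (Function.uncurry q))
    (hK : IsBoundedKernel q σm σp) (hW0 : ∀ y, 0 ≤ W y) (hWi : Integrable W μ) (w : X) :
    ∫ y, q w y * W y ∂μ ∈ Icc (σm * ∫ y, W y ∂μ) (σp * ∫ y, W y ∂μ) := by
  simpa only [mul_comm (W _)] using integral_mul_mem_Icc hW0 hWi
    hq.of_uncurry_left.aestronglyMeasurable (hK.lower w) (hK.upper w)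

lemma kernelAvg_mem_Icc (hq : Measurable (Function.uncurry q)) (hK : IsBoundedKernel q σm σp)
    (hW0 : ∀ y, 0 ≤ W y) (hWi : Integrable W μ) (hWpos : 0 < ∫ y, W y ∂μ)
    (hf : AEStronglyMeasurable f μ) (hfa : ∀ y, a ≤ f y) (hfb : ∀ y, f y ≤ b) (w : X) :
    kernelAvg μ q W f w ∈ Icc a b := by
  have hB := (mul_pos hK.pos hWpos).trans_le (integral_kernel_mul_mem_Icc hq hK hW0 hWi w).1
  have hA := integral_mul_mem_Icc (fun y => mul_nonneg (hK.nonneg w y) (hW0 y))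
    (integrable_kernel_mul hq hK hWi w) hf hfa hfb
  exact ⟨(le_div_iff₀ hB).2 hA.1, (div_le_iff₀ hB).2 hA.2⟩

/-- Doeblin splitting. The density is `r = (q w / ∫ q w W - σm / (σp ∫ W)) W`, nonnegative
because `σm ≤ q w` and `∫ q w W ≤ σp ∫ W`. -/
lemma exists_kernelAvg_eq_add_integral (hq : Measurable (Function.uncurry q))
    (hK : IsBoundedKernel q σm σp) (hW0 : ∀ y, 0 ≤ W y) (hWi : Integrable W μ)
    (hWpos : 0 < ∫ y, W y ∂μ) (hf : AEStronglyMeasurable f μ) (hfa : ∀ y, a ≤ f y)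
    (hfb : ∀ y, f y ≤ b) (w : X) :
    ∃ r : X → ℝ, (∀ y, 0 ≤ r y) ∧ Integrable r μ ∧ ∫ y, r y ∂μ = 1 - σm / σp ∧
      kernelAvg μ q W f w =
        σm / σp * ((∫ y, W y * f y ∂μ) / ∫ y, W y ∂μ) + ∫ y, r y * f y ∂μ := by
  set S := ∫ y, W y ∂μ with hS
  set B := ∫ y, q w y * W y ∂μ with hBdef
  have hσp : 0 < σp := hK.pos.trans_le (hK.lower_le_upper w)
  have hBS := integral_kernel_mul_mem_Icc hq hK hW0 hWi w
  have hB : 0 < B := (mul_pos hK.pos hWpos).trans_le hBS.1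
  have hqW := integrable_kernel_mul hq hK hWi w
  have hqWf : Integrable (fun y => q w y * W y * f y) μ := hqW.mul_bdd hf
    (Filter.Eventually.of_forall fun y => abs_le_max_abs_abs (hfa y) (hfb y))
  have hWf : Integrable (fun y => W y * f y) μ := hWi.mul_bdd hf
    (Filter.Eventually.of_forall fun y => abs_le_max_abs_abs (hfa y) (hfb y))
  refine ⟨fun y => q w y * W y / B - σm / (σp * S) * W y, fun y => ?_,
    (hqW.div_const B).sub (hWi.const_mul _), ?_, ?_⟩
  · have hq_ge : σm / (σp * S) ≤ q w y / B := by
      rw [div_le_div_iff₀ (by positivity) hB]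
      exact mul_le_mul (hK.lower w y) hBS.2 hB.le (hK.nonneg w y)
    change 0 ≤ q w y * W y / B - σm / (σp * S) * W y
    rw [mul_div_right_comm, ← sub_mul]
    exact mul_nonneg (sub_nonneg.2 hq_ge) (hW0 y)
  · rw [integral_sub (hqW.div_const B) (hWi.const_mul _), integral_div, integral_const_mul,
      ← hS, ← hBdef]
    field_simp
  · have hrf : ∀ y, (q w y * W y / B - σm / (σp * S) * W y) * f y =
        q w y * W y * f y / B - σm / (σp * S) * (W y * f y) := fun y => by ring
    simp only [hrf]
    rw [integral_sub (hqWf.div_const B) (hWf.const_mul _), integral_div, integral_const_mul,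
      kernelAvg, ← hBdef]
    field_simp
    ring

lemma kernelAvg_sub_kernelAvg_le (hq : Measurable (Function.uncurry q))
    (hK : IsBoundedKernel q σm σp) (hW0 : ∀ y, 0 ≤ W y) (hWi : Integrable W μ)
    (hWpos : 0 < ∫ y, W y ∂μ) (hf : AEStronglyMeasurable f μ) (hfa : ∀ y, a ≤ f y)
    (hfb : ∀ y, f y ≤ b) (w w' : X) :
    kernelAvg μ q W f w - kernelAvg μ q W f w' ≤ (1 - σm / σp) * (b - a) := by
  obtain ⟨r, hr0, hri, hr1, hr⟩ :=
    exists_kernelAvg_eq_add_integral hq hK hW0 hWi hWpos hf hfa hfb w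
  obtain ⟨r', hr0', hri', hr1', hr'⟩ :=
    exists_kernelAvg_eq_add_integral hq hK hW0 hWi hWpos hf hfa hfb w'
  have hup := (integral_mul_mem_Icc hr0 hri hf hfa hfb).2
  have hlow := (integral_mul_mem_Icc hr0' hri' hf hfa hfb).1
  rw [hr1] at hup
  rw [hr1'] at hlow
  rw [hr, hr']
  linarith

end kernelAvg

noncomputable def oneStepRatio (μ : Measure X) (q : X → X → ℝ) (g : ℕ → X → ℝ) (n : ℕ) (x : X) :
    ℝ :=
  Nseq μ q g x (n + 1) / Nseq μ q g x n

noncomputable def succWeight (μ : Measure X) (q : X → X → ℝ) (g : ℕ → X → ℝ) (n : ℕ) (y : X) :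
    ℝ :=
  g 1 y * Nseq μ q (seqShift 1 g) y n

section oneStepRatio

variable {μ : Measure X} [SigmaFinite μ] {q : X → X → ℝ} {σm σp : ℝ} {g : ℕ → X → ℝ}
  {a b : ℝ}

lemma measurable_oneStepRatio (hq : Measurable (Function.uncurry q))
    (hg : ∀ k, 1 ≤ k → Measurable (g k)) (n : ℕ) : Measurable (oneStepRatio μ q g n) :=
  (measurable_Nseq (μ := μ) hq hg (n + 1)).div (measurable_Nseq hq hg n)

lemma oneStepRatio_succ (hq : Measurable (Function.uncurry q)) (hK : IsBoundedKernel q σm σp)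
    (hg : IsLikelihoodSeq μ g) (n : ℕ) (w : X) :
    oneStepRatio μ q g (n + 1) w =
      kernelAvg μ q (succWeight μ q g n) (oneStepRatio μ q (seqShift 1 g) n) w := by
  rw [oneStepRatio, kernelAvg, Nseq_succ hq hK hg, Nseq_succ hq hK hg]
  congr 1
  refine integral_congr_ae (Filter.Eventually.of_forall fun y => ?_)
  have := (Nseq_pos hq hK (hg.seqShift 1) y n).ne'
  simp only [succWeight, oneStepRatio]
  field_simp

lemma succWeight_nonneg (hq : Measurable (Function.uncurry q)) (hK : IsBoundedKernel q σm σp)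
    (hg : IsLikelihoodSeq μ g) (n : ℕ) (y : X) : 0 ≤ succWeight μ q g n y :=
  mul_nonneg (hg.nonneg 1 le_rfl y) (Nseq_pos hq hK (hg.seqShift 1) y n).le

lemma integrable_succWeight (hq : Measurable (Function.uncurry q))
    (hK : IsBoundedKernel q σm σp) (hg : IsLikelihoodSeq μ g) (n : ℕ) :
    Integrable (succWeight μ q g n) μ :=
  (hg.integrable 1 le_rfl).mul_bdd
    (measurable_Nseq hq (hg.seqShift 1).measurable n).aestronglyMeasurable
    (Filter.Eventually.of_forall fun y =>
      (Real.norm_of_nonneg (Nseq_pos hq hK (hg.seqShift 1) y n).le).trans_le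
        (Nseq_mem_Icc hq hK (hg.seqShift 1) y n).2)

lemma integral_succWeight_pos (hq : Measurable (Function.uncurry q))
    (hK : IsBoundedKernel q σm σp) (hg : IsLikelihoodSeq μ g) (n : ℕ) :
    0 < ∫ y, succWeight μ q g n y ∂μ := by
  have hN := fun y => Nseq_mem_Icc hq hK (hg.seqShift 1) y n
  refine lt_of_lt_of_le ?_ (integral_mul_mem_Icc (hg.nonneg 1 le_rfl) (hg.integrable 1 le_rfl)
    (measurable_Nseq hq (hg.seqShift 1).measurable n).aestronglyMeasurable
    (fun y => (hN y).1) (fun y => (hN y).2)).1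
  exact mul_pos (mul_pos (pow_pos hK.pos n) (Finset.prod_pos fun k _ =>
    (hg.seqShift 1).integral_pos _ (by omega))) (hg.integral_pos 1 le_rfl)

lemma oneStepRatio_succ_mem_Icc (hq : Measurable (Function.uncurry q))
    (hK : IsBoundedKernel q σm σp) (hg : IsLikelihoodSeq μ g) {n : ℕ}
    (h : ∀ y, oneStepRatio μ q (seqShift 1 g) n y ∈ Icc a b) (w : X) :
    oneStepRatio μ q g (n + 1) w ∈ Icc a b := by
  rw [oneStepRatio_succ hq hK hg]
  exact kernelAvg_mem_Icc hq hK (succWeight_nonneg hq hK hg n) (integrable_succWeight hq hK hg n)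
    (integral_succWeight_pos hq hK hg n)
    (measurable_oneStepRatio hq (hg.seqShift 1).measurable n).aestronglyMeasurable
    (fun y => (h y).1) (fun y => (h y).2) w

lemma oneStepRatio_succ_sub_le (hq : Measurable (Function.uncurry q))
    (hK : IsBoundedKernel q σm σp) (hg : IsLikelihoodSeq μ g) {n : ℕ}
    (h : ∀ y, oneStepRatio μ q (seqShift 1 g) n y ∈ Icc a b) (w w' : X) :
    oneStepRatio μ q g (n + 1) w - oneStepRatio μ q g (n + 1) w' ≤ (1 - σm / σp) * (b - a) := by
  rw [oneStepRatio_succ hq hK hg, oneStepRatio_succ hq hK hg]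
  exact kernelAvg_sub_kernelAvg_le hq hK (succWeight_nonneg hq hK hg n)
    (integrable_succWeight hq hK hg n) (integral_succWeight_pos hq hK hg n)
    (measurable_oneStepRatio hq (hg.seqShift 1).measurable n).aestronglyMeasurable
    (fun y => (h y).1) (fun y => (h y).2) w w'

lemma exists_oneStepRatio_mem_Icc (hq : Measurable (Function.uncurry q))
    (hK : IsBoundedKernel q σm σp) (n : ℕ) (hg : IsLikelihoodSeq μ g) :
    ∃ a, σm * ∫ y, g (n + 1) y ∂μ ≤ a ∧ ∀ w, oneStepRatio μ q g n w ∈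
      Icc a (a + (1 - σm / σp) ^ n * ((σp - σm) * ∫ y, g (n + 1) y ∂μ)) := by
  induction n generalizing g with
  | zero =>
    refine ⟨_, le_rfl, fun w => ?_⟩
    have h := Nseq_mem_Icc hq hK hg w 1
    simp only [pow_one, Fin.prod_univ_one, Fin.val_zero, zero_add] at h ⊢
    rw [oneStepRatio, Nseq_zero, div_one]
    exact ⟨h.1, h.2.trans_eq (by ring)⟩
  | succ n ih =>
    obtain ⟨a, ha, hmem⟩ := ih (hg.seqShift 1)
    obtain ⟨a', ha', hmem'⟩ := exists_forall_mem_Icc_of_sub_le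
      (fun w => (oneStepRatio_succ_mem_Icc hq hK hg hmem w).1)
      (oneStepRatio_succ_sub_le hq hK hg hmem)
    refine ⟨a', ha.trans ha', fun w => ?_⟩
    convert hmem' w using 3
    simp only [seqShift]
    ring

lemma oneStepRatio_add_mem_Icc (hq : Measurable (Function.uncurry q))
    (hK : IsBoundedKernel q σm σp) (n t : ℕ) (hg : IsLikelihoodSeq μ g)
    (h : ∀ y, oneStepRatio μ q (seqShift t g) n y ∈ Icc a b) (w : X) :
    oneStepRatio μ q g (n + t) w ∈ Icc a b := by
  induction t generalizing g w with
  | zero => exact h w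
  | succ t ih =>
    refine oneStepRatio_succ_mem_Icc hq hK hg (fun y => ih (hg.seqShift 1) ?_ y) w
    rwa [seqShift_seqShift]

end oneStepRatio

end

theorem coupled_one_step_log_density_coalescence_general
    {X : Type*} [MeasurableSpace X] (μ : Measure X) [IsProbabilityMeasure μ]
    (σm σp : ℝ) (hσm : 0 < σm)
    (q : X → X → ℝ) (hq : Measurable (Function.uncurry q))
    (hql : ∀ x x', σm ≤ q x x') (hqu : ∀ x x', q x x' ≤ σp)
    (g g' : ℕ → X → ℝ)
    (hgm : ∀ k, 1 ≤ k → Measurable (g k))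
    (hg0 : ∀ k, 1 ≤ k → ∀ x, 0 ≤ g k x)
    (hgi : ∀ k, 1 ≤ k → Integrable (g k) μ)
    (hgpos : ∀ k, 1 ≤ k → 0 < ∫ x, g k x ∂μ)
    (hgm' : ∀ k, 1 ≤ k → Measurable (g' k))
    (hg0' : ∀ k, 1 ≤ k → ∀ x, 0 ≤ g' k x)
    (hgi' : ∀ k, 1 ≤ k → Integrable (g' k) μ)
    (hgpos' : ∀ k, 1 ≤ k → 0 < ∫ x, g' k x ∂μ)
    (T : ℕ) (hcouple : ∀ k, T < k → g k = g' k)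
    (n : ℕ) (hn : T + 1 ≤ n) (x x' : X) :
    |Real.log (Nseq μ q g x n / Nseq μ q g x (n - 1)) -
        Real.log (Nseq μ q g' x' n / Nseq μ q g' x' (n - 1))| ≤
      (1 - σm / σp) ^ (n - T - 1) / (1 - (1 - σm / σp)) := by
  have hK : IsBoundedKernel q σm σp := ⟨hσm, hql, hqu⟩
  have hg : IsLikelihoodSeq μ g := ⟨hgm, hg0, hgi, hgpos⟩
  have hg' : IsLikelihoodSeq μ g' := ⟨hgm', hg0', hgi', hgpos'⟩
  obtain ⟨m, rfl⟩ : ∃ m, n = m + T + 1 := ⟨n - T - 1, by omega⟩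
  have htail : ∀ y j, Nseq μ q (seqShift T g') y j = Nseq μ q (seqShift T g) y j :=
    Nseq_congr fun k _ => (hcouple (k + T) (by omega)).symm
  obtain ⟨a, ha, hmem⟩ := exists_oneStepRatio_mem_Icc hq hK m (hg.seqShift T)
  have hmem' : ∀ y, oneStepRatio μ q (seqShift T g') m y ∈ _ := fun y => by
    simpa only [oneStepRatio, htail] using hmem y
  have hI := (hg.seqShift T).integral_pos (m + 1) (by omega)
  rw [show m + T + 1 - 1 = m + T by omega, show m + T + 1 - T - 1 = m by omega]
  calc _ ≤ _ := abs_log_sub_log_le_of_mem_Icc ((mul_pos hσm hI).trans_le ha)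
        (oneStepRatio_add_mem_Icc hq hK m T hg hmem x)
        (oneStepRatio_add_mem_Icc hq hK m T hg' hmem' x')
    _ ≤ _ := pow_mul_div_le_pow_div_one_sub m hσm (hK.lower_le_upper x) hI ha

/-- inequality (26) from the proof of Lemma 11. If the two
observation-function families `g` and `g′` agree for all indices `k > T`, then
for every `n ≥ T + 1` and all initializations `x, x′`, the one-step conditional
log-densities computed from the two families differ by at most
`ρ^{n−T−1}/(1 − ρ)`, where `ρ = 1 − σ₋/σ₊`. -/
theorem coupled_one_step_log_density_coalescence
    {X : Type*} [MeasurableSpace X] (μ : Measure X) [IsProbabilityMeasure μ]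
    (σm σp : ℝ) (hσm : 0 < σm) (hσ : σm ≤ σp)
    (q : X → X → ℝ) (hq : Measurable (Function.uncurry q))
    (hql : ∀ x x', σm ≤ q x x') (hqu : ∀ x x', q x x' ≤ σp)
    (g g' : ℕ → X → ℝ)
    (hgm : ∀ k, 1 ≤ k → Measurable (g k))
    (hg0 : ∀ k, 1 ≤ k → ∀ x, 0 ≤ g k x)
    (hgi : ∀ k, 1 ≤ k → Integrable (g k) μ)
    (hgpos : ∀ k, 1 ≤ k → 0 < ∫ x, g k x ∂μ)
    (hgm' : ∀ k, 1 ≤ k → Measurable (g' k))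
    (hg0' : ∀ k, 1 ≤ k → ∀ x, 0 ≤ g' k x)
    (hgi' : ∀ k, 1 ≤ k → Integrable (g' k) μ)
    (hgpos' : ∀ k, 1 ≤ k → 0 < ∫ x, g' k x ∂μ)
    (T : ℕ) (hcouple : ∀ k, T < k → g k = g' k)
    (n : ℕ) (hn : T + 1 ≤ n) (x x' : X) :
    |Real.log (Nseq μ q g x n / Nseq μ q g x (n - 1)) -
        Real.log (Nseq μ q g' x' n / Nseq μ q g' x' (n - 1))| ≤
      (1 - σm / σp) ^ (n - T - 1) / (1 - (1 - σm / σp)) :=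
  coupled_one_step_log_density_coalescence_general μ σm σp hσm q hq hql hqu g g' hgm hg0 hgi hgpos
    hgm' hg0' hgi' hgpos' T hcouple n hn x x'
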